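/- arXiv:math/0702247 — 2 statements merged into one kernel-verified Lean document; each statement's English description precedes it below -/
import Mathlib

section
/- Let N ≥ 2 be an integer and let σ > (N−1)/2. There exist numbers t_σ > 0 and c_σ > 0 such that for every t* > t_σ and every continuous function g : (t*, ∞) → ℝ with B := sup_{t > t*} t^{1+σ} |g(t)| < ∞, there exists a C² function f : (t*, ∞) → ℝ satisfying f''(t) + N f'(t) + (N(N−1)/2) · f(t)/t = g(t) for all t > t*, together with the estimate sup_{t > t*} t^σ |f(t)| ≤ c_σ B. -/
open MeasureTheory Metric Set Filter Topology
open scoped RealInnerProductSpace ENNReal NNReal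

noncomputable section

/-- `ℝ^N` as a Euclidean space. -/
abbrev ES (N : ℕ) := EuclideanSpace ℝ (Fin N)

/-- The Euclidean Laplacian `Δu x = ∑ i, ∂²u/∂xᵢ² (x)`. -/
def lap {N : ℕ} (u : ES N → ℝ) (x : ES N) : ℝ :=
  ∑ i, iteratedFDeriv ℝ 2 u x ![EuclideanSpace.single i 1, EuclideanSpace.single i 1]

/-- The last coordinate `x_N` of a point of `ℝ^N` (junk value `0` if `N = 0`). -/
def lastCoord {N : ℕ} (x : ES N) : ℝ :=
  if h : 0 < N then x ⟨N - 1, Nat.sub_lt h one_pos⟩ else 0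

/-- The open upper half-space `ℝ^N_+ = {x : x_N > 0}`. -/
def upperHalf (N : ℕ) : Set (ES N) := {x | 0 < lastCoord x}

/-- The open upper half-sphere `S^{N-1}_+`. -/
def halfSphere (N : ℕ) : Set (ES N) := sphere 0 1 ∩ upperHalf N

/-- `Ω ⊆ ℝ^N` is a bounded domain with smooth boundary: it is open, bounded, nonempty,
and near each boundary point it admits a smooth local defining function with
nonvanishing gradient, negative exactly on `Ω` and zero exactly on `∂Ω`. -/
def IsSmoothDomain {N : ℕ} (Ω : Set (ES N)) : Prop :=
  IsOpen Ω ∧ Bornology.IsBounded Ω ∧ Ω.Nonempty ∧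
  ∀ x ∈ frontier Ω, ∃ f : ES N → ℝ, ∃ U ∈ nhds x,
    ContDiff ℝ (⊤ : ℕ∞) f ∧ (∀ y ∈ U, gradient f y ≠ 0) ∧
    (Ω ∩ U = {y ∈ U | f y < 0}) ∧ (frontier Ω ∩ U = {y ∈ U | f y = 0})

/-- `ν` is the unit inner normal to `∂Ω` at `ξ`. -/
def IsInnerNormalAt {N : ℕ} (Ω : Set (ES N)) (ξ ν : ES N) : Prop :=
  ‖ν‖ = 1 ∧ ∃ f : ES N → ℝ, ∃ U ∈ nhds ξ,
    ContDiff ℝ (⊤ : ℕ∞) f ∧ gradient f ξ ≠ 0 ∧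
    (Ω ∩ U = {y ∈ U | f y < 0}) ∧ (frontier Ω ∩ U = {y ∈ U | f y = 0}) ∧
    ν = -(‖gradient f ξ‖⁻¹) • gradient f ξ

/-- The open cone `Γ_α(ξ, ν)` with vertex `ξ`, axis direction `ν` and
half-opening angle `α`. -/
def cone {N : ℕ} (ξ ν : ES N) (α : ℝ) : Set (ES N) :=
  {x | x ≠ ξ ∧ ‖x - ξ‖ * Real.cos α < ⟪x - ξ, ν⟫}

/-- `u(x) → l` as `x → ξ` nontangentially (within `Ω`, along every cone of
half-opening angle `α ∈ [0, π/2)` around the inner normal at `ξ`). -/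
def NTTendsto {N : ℕ} (Ω : Set (ES N)) (u : ES N → ℝ) (ξ : ES N) (l : Filter ℝ) : Prop :=
  ∀ ν : ES N, IsInnerNormalAt Ω ξ ν →
    ∀ α ∈ Ico (0:ℝ) (Real.pi / 2), Tendsto u (nhdsWithin ξ (cone ξ ν α ∩ Ω)) l

/-- `u` is a very weak solution of `Δu + u^p = 0` in `Ω` vanishing on `∂Ω`. -/
structure VeryWeakSolution {N : ℕ} (Ω : Set (ES N)) (p : ℝ) (u : ES N → ℝ) : Prop where
  smooth : ContDiffOn ℝ (⊤ : ℕ∞) u Ω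
  pos : ∀ x ∈ Ω, 0 < u x
  mem_L1 : IntegrableOn u Ω volume
  mem_L1' : IntegrableOn (fun x => u x ^ p * infDist x (frontier Ω)) Ω volume
  weak_eq : ∀ v : ES N → ℝ, ContDiffOn ℝ 2 v (closure Ω) →
    (∀ x ∈ frontier Ω, v x = 0) →
    ∫ x in Ω, (u x * lap v x + u x ^ p * v x) = 0

/-- `S` is a smooth embedded `k`-dimensional submanifold of `ℝ^N` without boundary:
locally it is the zero set of a smooth submersion into `ℝ^{N-k}`. -/
def IsEmbeddedSubmanifold {N : ℕ} (k : ℕ) (S : Set (ES N)) : Prop :=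
  ∀ x ∈ S, ∃ f : ES N → EuclideanSpace ℝ (Fin (N - k)), ∃ U ∈ nhds x,
    ContDiff ℝ (⊤ : ℕ∞) f ∧ (∀ y ∈ U, Function.Surjective ⇑(fderiv ℝ f y)) ∧
    S ∩ U = {y ∈ U | f y = 0}

/-- The singular set of `u`: boundary points near which `u` admits no smooth
extension to `cl(Ω) ∩ V`. -/
def singSet {N : ℕ} (Ω : Set (ES N)) (u : ES N → ℝ) : Set (ES N) :=
  {x ∈ frontier Ω | ¬ ∃ V ∈ nhds x, ∃ g : ES N → ℝ,
    ContDiffOn ℝ (⊤ : ℕ∞) g (closure Ω ∩ V) ∧ EqOn u g (Ω ∩ V)}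

section Stmt10Aux
open intervalIntegral


noncomputable section Stmt10Aux

/-- Solution operator for `f'' + n f' = h` (decaying branch), based at `a`. -/
def solOp (n a : ℝ) (h : ℝ → ℝ) (t : ℝ) : ℝ :=
  -(1/n) * ((∫ r in Set.Ioi a, h r) - ∫ r in a..t, h r)
    - (1/n) * (Real.exp (-(n*t)) * ∫ r in a..t, Real.exp (n*r) * h r)

variable {n σ s M : ℝ} {h : ℝ → ℝ}

lemma uIcc_subset_Ioi {u v : ℝ} (hu : s < u) (hv : s < v) : Set.uIcc u v ⊆ Set.Ioi s :=
  fun _ hx => lt_of_lt_of_le (lt_min hu hv) hx.1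

lemma ii_of_gt (hcont : ContinuousOn h (Set.Ioi s)) {u v : ℝ} (hu : s < u) (hv : s < v) :
    IntervalIntegrable h volume u v :=
  (hcont.mono (uIcc_subset_Ioi hu hv)).intervalIntegrable

lemma contOn_exp_mul (hcont : ContinuousOn h (Set.Ioi s)) :
    ContinuousOn (fun r => Real.exp (n*r) * h r) (Set.Ioi s) :=
  ((Real.continuous_exp.comp (continuous_const.mul continuous_id)).continuousOn).mul hcont

lemma integrableOn_of_bound (hσ : 0 < σ) (hs : 0 < s)
    (hcont : ContinuousOn h (Set.Ioi s))
    (hbd : ∀ r, s < r → |h r| ≤ M * r ^ (-(1+σ))) {t : ℝ} (ht : s < t) :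
    IntegrableOn h (Set.Ioi t) := by
  have ht0 : 0 < t := hs.trans ht
  have hmeas : AEStronglyMeasurable h (volume.restrict (Set.Ioi t)) :=
    (hcont.mono (Set.Ioi_subset_Ioi ht.le)).aestronglyMeasurable measurableSet_Ioi
  have hint : IntegrableOn (fun r : ℝ => M * r ^ (-(1+σ))) (Set.Ioi t) :=
    (integrableOn_Ioi_rpow_of_lt (by linarith) ht0).const_mul M
  refine hint.mono' hmeas ?_
  refine (ae_restrict_iff' measurableSet_Ioi).mpr (ae_of_all _ fun r hr => ?_)
  simpa [abs_of_nonneg] using hbd r (ht.trans hr)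

lemma integral_Ioi_split (hσ : 0 < σ) (hs : 0 < s)
    (hcont : ContinuousOn h (Set.Ioi s))
    (hbd : ∀ r, s < r → |h r| ≤ M * r ^ (-(1+σ)))
    {a t : ℝ} (ha : s < a) (ht : s < t) :
    (∫ r in Set.Ioi a, h r) - ∫ r in a..t, h r = ∫ r in Set.Ioi t, h r := by
  have hIa := integrableOn_of_bound hσ hs hcont hbd ha
  have hIt := integrableOn_of_bound hσ hs hcont hbd ht
  rcases le_total a t with hle | hle
  · rw [intervalIntegral.integral_of_le hle]
    have hu : Set.Ioc a t ∪ Set.Ioi t = Set.Ioi a := Set.Ioc_union_Ioi_eq_Ioi hle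
    have hdisj : Disjoint (Set.Ioc a t) (Set.Ioi t) :=
      Set.disjoint_left.mpr fun x hx hx' => absurd hx.2 (not_le.mpr hx')
    have := MeasureTheory.setIntegral_union hdisj measurableSet_Ioi
      (hIa.mono_set Set.Ioc_subset_Ioi_self) hIt
    rw [hu] at this
    rw [this]; ring
  · rw [intervalIntegral.integral_symm, intervalIntegral.integral_of_le hle]
    have hu : Set.Ioc t a ∪ Set.Ioi a = Set.Ioi t := Set.Ioc_union_Ioi_eq_Ioi hle
    have hdisj : Disjoint (Set.Ioc t a) (Set.Ioi a) :=
      Set.disjoint_left.mpr fun x hx hx' => absurd hx.2 (not_le.mpr hx')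
    have := MeasureTheory.setIntegral_union hdisj measurableSet_Ioi
      (hIt.mono_set Set.Ioc_subset_Ioi_self) hIa
    rw [hu] at this
    rw [this]; ring

lemma integral_rpow_Ioi (hσ : 0 < σ) {t : ℝ} (ht : 0 < t) :
    ∫ r in Set.Ioi t, r ^ (-(1+σ)) = t ^ (-σ) / σ := by
  rw [integral_Ioi_rpow_of_lt (by linarith) ht]
  rw [show -(1+σ) + 1 = -σ by ring]
  rw [div_eq_div_iff (by linarith) (by linarith)]
  ring

lemma hasDerivAt_J (hcont : ContinuousOn h (Set.Ioi s)) {a t : ℝ} (ha : s < a) (ht : s < t) :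
    HasDerivAt (fun u => ∫ r in a..u, Real.exp (n*r) * h r) (Real.exp (n*t) * h t) t := by
  have hc := contOn_exp_mul (n := n) hcont
  exact intervalIntegral.integral_hasDerivAt_right (ii_of_gt hc ha ht)
    ((hc.stronglyMeasurableAtFilter isOpen_Ioi) t ht)
    (hc.continuousAt (isOpen_Ioi.mem_nhds ht))

lemma hasDerivAt_I (hcont : ContinuousOn h (Set.Ioi s)) {a t : ℝ} (ha : s < a) (ht : s < t) :
    HasDerivAt (fun u => ∫ r in a..u, h r) (h t) t :=
  intervalIntegral.integral_hasDerivAt_right (ii_of_gt hcont ha ht)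
    ((hcont.stronglyMeasurableAtFilter isOpen_Ioi) t ht)
    (hcont.continuousAt (isOpen_Ioi.mem_nhds ht))

lemma hasDerivAt_expne (n t : ℝ) :
    HasDerivAt (fun u : ℝ => Real.exp (-(n*u))) (-n * Real.exp (-(n*t))) t := by
  have h1 : HasDerivAt (fun u : ℝ => -(n*u)) (-n) t := by
    have := ((hasDerivAt_id t).const_mul n).neg
    simp only [mul_one] at this
    exact this
  simpa [mul_comm] using h1.exp

lemma hasDerivAt_solOp (hn : n ≠ 0) (hcont : ContinuousOn h (Set.Ioi s))
    {a t : ℝ} (ha : s < a) (ht : s < t) :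
    HasDerivAt (solOp n a h)
      (Real.exp (-(n*t)) * ∫ r in a..t, Real.exp (n*r) * h r) t := by
  have hI := hasDerivAt_I hcont ha ht
  have hJ := hasDerivAt_J (n := n) hcont ha ht
  have hexp := hasDerivAt_expne n t
  have hD := (((hasDerivAt_const t (∫ r in Set.Ioi a, h r)).sub hI).const_mul (-(1/n))).sub
    ((hexp.mul hJ).const_mul (1/n))
  have hcancel : Real.exp (-(n*t)) * Real.exp (n*t) = 1 := by
    rw [← Real.exp_add]; simp
  refine hD.congr_deriv (Eq.symm ?_)
  have hne : (1/n) * n = 1 := by field_simp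
  set x := Real.exp (-(n*t))
  set y := Real.exp (n*t)
  set J := ∫ r in a..t, Real.exp (n*r) * h r
  linear_combination (-(x*J)) * hne + (h t/n) * hcancel

lemma hasDerivAt_v (hcont : ContinuousOn h (Set.Ioi s))
    {a t : ℝ} (ha : s < a) (ht : s < t) :
    HasDerivAt (fun u => Real.exp (-(n*u)) * ∫ r in a..u, Real.exp (n*r) * h r)
      (h t - n * (Real.exp (-(n*t)) * ∫ r in a..t, Real.exp (n*r) * h r)) t := by
  have hJ := hasDerivAt_J (n := n) hcont ha ht
  have hexp := hasDerivAt_expne n t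
  have hD := hexp.mul hJ
  have hcancel : Real.exp (-(n*t)) * Real.exp (n*t) = 1 := by
    rw [← Real.exp_add]; simp
  refine hD.congr_deriv (Eq.symm ?_)
  set x := Real.exp (-(n*t))
  set y := Real.exp (n*t)
  set J := ∫ r in a..t, Real.exp (n*r) * h r
  linear_combination (-(h t)) * hcancel

lemma integral_exp_mul' (hn : 0 < n) (u v : ℝ) :
    ∫ r in u..v, Real.exp (n*r) = (Real.exp (n*v) - Real.exp (n*u))/n := by
  have hder : ∀ x ∈ Set.uIcc u v, HasDerivAt (fun y => Real.exp (n*y)/n) (Real.exp (n*x)) x := by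
    intro x _
    have h1 : HasDerivAt (fun y : ℝ => n*y) n x := by simpa using (hasDerivAt_id x).const_mul n
    have h2 := (h1.exp).div_const n
    simpa [mul_comm, mul_div_assoc, mul_div_cancel_left₀ _ hn.ne'] using h2
  have hint : IntervalIntegrable (fun r => Real.exp (n*r)) volume u v :=
    (Real.continuous_exp.comp (continuous_const.mul continuous_id)).continuousOn.intervalIntegrable
  rw [intervalIntegral.integral_eq_sub_of_hasDerivAt hder hint]
  ring

lemma contOn_rpow_ne (p : ℝ) : ContinuousOn (fun r : ℝ => r ^ p) {x : ℝ | x ≠ 0} :=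
  fun r hr => (Real.continuousAt_rpow_const r p (Or.inl hr)).continuousWithinAt

lemma rpow_split {t σ : ℝ} (ht0 : 0 < t) : t ^ (-(1+σ)) = t⁻¹ * t ^ (-σ) := by
  rw [show -(1+σ) = -1 + -σ by ring, Real.rpow_add ht0, Real.rpow_neg_one]

lemma J_est (hn : 1 ≤ n) (hσ : 0 < σ) (hM : 0 ≤ M) {δ : ℝ} (hδ : 0 < δ)
    (hcont : ContinuousOn h (Set.Ioi s))
    (hbd : ∀ r, s < r → |h r| ≤ M * r ^ (-(1+σ)))
    (hs1 : 1 ≤ s)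
    (hP2 : ∀ x, s ≤ x → x ^ σ * Real.exp (-(n/2) * x) ≤ σ * δ / 2)
    (hP3 : Real.exp n / s ≤ δ)
    (hP4 : (2:ℝ) ^ σ / s ≤ δ)
    (hP5 : (2:ℝ) ^ (1+σ) / s ≤ δ / 2)
    {t : ℝ} (ht : s < t) :
    (1/n) * (Real.exp (-(n*t)) * |∫ r in (s+1)..t, Real.exp (n*r) * h r|) ≤ M * δ * t ^ (-σ) := by
  have hn0 : (0:ℝ) < n := lt_of_lt_of_le one_pos hn
  have hs0 : (0:ℝ) < s := lt_of_lt_of_le one_pos hs1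
  have ht0 : (0:ℝ) < t := hs0.trans ht
  have ha_gt : s < s + 1 := by linarith
  have ha0 : (0:ℝ) < s + 1 := by linarith
  have ha1 : (1:ℝ) ≤ s + 1 := by linarith
  have htneg : (0:ℝ) < t ^ (-σ) := Real.rpow_pos_of_pos ht0 _
  have hinv1 : 1/n ≤ 1 := by rw [div_le_one hn0]; exact hn
  have hinv0 : (0:ℝ) < 1/n := by positivity
  have hexp0 : (0:ℝ) < Real.exp (-(n*t)) := Real.exp_pos _
  have hce := contOn_exp_mul (n := n) hcont
  set a := s + 1 with ha_def
  rcases le_total t a with hta | hat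
  · -- Case (i): t ≤ a
    have hC : ∀ x ∈ Set.uIoc a t, ‖Real.exp (n*x) * h x‖ ≤ Real.exp (n*a) * (M * t ^ (-(1+σ))) := by
      intro x hx
      rw [Set.uIoc_comm, Set.uIoc_of_le hta] at hx
      obtain ⟨hx1, hx2⟩ := hx
      have hxgt : s < x := ht.trans hx1
      rw [Real.norm_eq_abs, abs_mul, Real.abs_exp]
      have e1 : Real.exp (n*x) ≤ Real.exp (n*a) :=
        Real.exp_le_exp.mpr (mul_le_mul_of_nonneg_left hx2 hn0.le)
      have e2 : |h x| ≤ M * t ^ (-(1+σ)) :=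
        (hbd x hxgt).trans (mul_le_mul_of_nonneg_left
          (Real.rpow_le_rpow_of_nonpos ht0 hx1.le (by linarith)) hM)
      exact mul_le_mul e1 e2 (abs_nonneg _) (Real.exp_pos _).le
    have hJb : |∫ r in a..t, Real.exp (n*r) * h r|
        ≤ (Real.exp (n*a) * (M * t ^ (-(1+σ)))) * |t - a| := by
      simpa [Real.norm_eq_abs] using
        intervalIntegral.norm_integral_le_of_norm_le_const hC
    have habs : |t - a| ≤ 1 := by
      rw [abs_sub_comm, abs_of_nonneg (by linarith)]; linarith
    have hCpos : 0 ≤ Real.exp (n*a) * (M * t ^ (-(1+σ))) := by positivity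
    have hJb2 : |∫ r in a..t, Real.exp (n*r) * h r| ≤ Real.exp (n*a) * (M * t ^ (-(1+σ))) := by
      calc |∫ r in a..t, Real.exp (n*r) * h r|
          ≤ (Real.exp (n*a) * (M * t ^ (-(1+σ)))) * |t - a| := hJb
        _ ≤ (Real.exp (n*a) * (M * t ^ (-(1+σ)))) * 1 :=
            mul_le_mul_of_nonneg_left habs hCpos
        _ = Real.exp (n*a) * (M * t ^ (-(1+σ))) := mul_one _
    have hkey : Real.exp (-(n*t)) * Real.exp (n*a) ≤ Real.exp n := by
      rw [← Real.exp_add]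
      exact Real.exp_le_exp.mpr (by nlinarith)
    calc (1/n) * (Real.exp (-(n*t)) * |∫ r in a..t, Real.exp (n*r) * h r|)
        ≤ 1 * (Real.exp (-(n*t)) * (Real.exp (n*a) * (M * t ^ (-(1+σ))))) := by
          apply mul_le_mul hinv1 (mul_le_mul_of_nonneg_left hJb2 hexp0.le) (by positivity) one_pos.le
      _ = (Real.exp (-(n*t)) * Real.exp (n*a)) * (M * t ^ (-(1+σ))) := by ring
      _ ≤ Real.exp n * (M * t ^ (-(1+σ))) := mul_le_mul_of_nonneg_right hkey (by positivity)
      _ = (Real.exp n * t⁻¹) * (M * t ^ (-σ)) := by rw [rpow_split ht0]; ring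
      _ ≤ δ * (M * t ^ (-σ)) := by
          refine mul_le_mul_of_nonneg_right ?_ (by positivity)
          have heq : Real.exp n * t⁻¹ = Real.exp n / t := by ring
          rw [heq]
          calc Real.exp n / t ≤ Real.exp n / s :=
                div_le_div_of_nonneg_left (Real.exp_pos _).le hs0 ht.le
            _ ≤ δ := hP3
      _ = M * δ * t ^ (-σ) := by ring
  · -- a ≤ t
    have hiig : ∀ {u v : ℝ}, s < u → s < v →
        IntervalIntegrable (fun r => |Real.exp (n*r) * h r|) volume u v :=
      fun hu hv => ((hce.mono (uIcc_subset_Ioi hu hv)).abs).intervalIntegrable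
    have hii_exp : ∀ (u v : ℝ), IntervalIntegrable (fun r => Real.exp (n*r)) volume u v :=
      fun u v => (Real.continuous_exp.comp
        (continuous_const.mul continuous_id)).continuousOn.intervalIntegrable
    have hii_rpow : ∀ {u v : ℝ}, s < u → s < v →
        IntervalIntegrable (fun r : ℝ => r ^ (-(1+σ))) volume u v :=
      fun hu hv => ((contOn_rpow_ne (-(1+σ))).mono (fun x hx =>
        ne_of_gt (hs0.trans ((uIcc_subset_Ioi hu hv) hx)))).intervalIntegrable
    have hcancel : Real.exp (-(n*t)) * Real.exp (n*t) = 1 := by rw [← Real.exp_add]; simp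
    have habs_le : ∀ {u v : ℝ}, u ≤ v → |∫ r in u..v, Real.exp (n*r) * h r|
        ≤ ∫ r in u..v, |Real.exp (n*r) * h r| := by
      intro u v huv
      have := intervalIntegral.norm_integral_le_integral_norm
        (f := fun r => Real.exp (n*r) * h r) (μ := volume) huv
      simpa only [Real.norm_eq_abs] using this
    rcases le_total t (2*a) with ht2a | h2at
    · -- Case (ii): a ≤ t ≤ 2a
      have hb2 : ∫ r in a..t, |Real.exp (n*r) * h r|
          ≤ ∫ r in a..t, (M * a ^ (-(1+σ))) * Real.exp (n*r) := by
        refine intervalIntegral.integral_mono_on hat (hiig ha_gt ht)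
          ((hii_exp a t).const_mul _) (fun x hx => ?_)
        obtain ⟨hx1, _⟩ := hx
        have hxgt : s < x := lt_of_lt_of_le ha_gt hx1
        rw [abs_mul, Real.abs_exp]
        have e2 : |h x| ≤ M * a ^ (-(1+σ)) :=
          (hbd x hxgt).trans
            (mul_le_mul_of_nonneg_left (Real.rpow_le_rpow_of_nonpos ha0 hx1 (by linarith)) hM)
        calc Real.exp (n*x) * |h x| ≤ Real.exp (n*x) * (M * a ^ (-(1+σ))) :=
              mul_le_mul_of_nonneg_left e2 (Real.exp_pos _).le
          _ = (M * a ^ (-(1+σ))) * Real.exp (n*x) := by ring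
      have hb3 : ∫ r in a..t, (M * a ^ (-(1+σ))) * Real.exp (n*r)
          = (M * a ^ (-(1+σ))) * ((Real.exp (n*t) - Real.exp (n*a))/n) := by
        rw [intervalIntegral.integral_const_mul, integral_exp_mul' hn0]
      have hJb : |∫ r in a..t, Real.exp (n*r) * h r|
          ≤ (M * a ^ (-(1+σ))) * ((Real.exp (n*t) - Real.exp (n*a))/n) :=
        (habs_le hat).trans (hb2.trans_eq hb3)
      have hexpfac : Real.exp (-(n*t)) * ((Real.exp (n*t) - Real.exp (n*a))/n) ≤ 1/n := by
        have heq : Real.exp (-(n*t)) * ((Real.exp (n*t) - Real.exp (n*a))/n)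
            = (Real.exp (-(n*t)) * Real.exp (n*t) - Real.exp (-(n*t)) * Real.exp (n*a))/n := by
          ring
        rw [heq, hcancel]
        have h2 : 0 ≤ Real.exp (-(n*t)) * Real.exp (n*a) := by positivity
        gcongr
        linarith
      have h2σ : (0:ℝ) < 2 ^ σ := Real.rpow_pos_of_pos two_pos σ
      have hkey : a ^ (-(1+σ)) ≤ δ * t ^ (-σ) := by
        have hmono : (2*a) ^ (-σ) ≤ t ^ (-σ) :=
          Real.rpow_le_rpow_of_nonpos ht0 ht2a (by linarith)
        have hsplit2a : ((2:ℝ)*a) ^ (-σ) = 2 ^ (-σ) * a ^ (-σ) :=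
          Real.mul_rpow (by norm_num) ha0.le
        have h2negσ : (2:ℝ) ^ (-σ) = ((2:ℝ) ^ σ)⁻¹ := Real.rpow_neg (by norm_num) σ
        have hanegσ : (0:ℝ) < a ^ (-σ) := Real.rpow_pos_of_pos ha0 _
        have hP4' : (2:ℝ)^σ ≤ δ * s := by rw [div_le_iff₀ hs0] at hP4; exact hP4
        have hbound : a⁻¹ ≤ δ * 2 ^ (-σ) := by
          have h1 : a⁻¹ ≤ s⁻¹ := inv_anti₀ hs0 ha_gt.le
          have h3 : 1 ≤ δ * s * ((2:ℝ)^σ)⁻¹ := by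
            calc (1:ℝ) = 2^σ * ((2:ℝ)^σ)⁻¹ := (mul_inv_cancel₀ h2σ.ne').symm
              _ ≤ δ * s * ((2:ℝ)^σ)⁻¹ := mul_le_mul_of_nonneg_right hP4' (by positivity)
          have h2 : s⁻¹ ≤ δ * 2 ^ (-σ) := by
            rw [h2negσ]
            calc s⁻¹ = 1 * s⁻¹ := (one_mul _).symm
              _ ≤ (δ * s * ((2:ℝ)^σ)⁻¹) * s⁻¹ := mul_le_mul_of_nonneg_right h3 (by positivity)
              _ = δ * ((2:ℝ)^σ)⁻¹ := by field_simp
          linarith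
        calc a ^ (-(1+σ)) = a⁻¹ * a ^ (-σ) := rpow_split ha0
          _ ≤ (δ * 2 ^ (-σ)) * a ^ (-σ) := mul_le_mul_of_nonneg_right hbound hanegσ.le
          _ = δ * ((2*a) ^ (-σ)) := by rw [hsplit2a]; ring
          _ ≤ δ * t ^ (-σ) := mul_le_mul_of_nonneg_left hmono hδ.le
      have hMa : (0:ℝ) ≤ M * a ^ (-(1+σ)) := by positivity
      calc (1/n) * (Real.exp (-(n*t)) * |∫ r in a..t, Real.exp (n*r) * h r|)
          ≤ 1 * (Real.exp (-(n*t)) * ((M * a ^ (-(1+σ))) * ((Real.exp (n*t) - Real.exp (n*a))/n))) := by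
            apply mul_le_mul hinv1 (mul_le_mul_of_nonneg_left hJb hexp0.le) (by positivity) one_pos.le
        _ = (M * a ^ (-(1+σ))) * (Real.exp (-(n*t)) * ((Real.exp (n*t) - Real.exp (n*a))/n)) := by
            ring
        _ ≤ (M * a ^ (-(1+σ))) * (1/n) := mul_le_mul_of_nonneg_left hexpfac hMa
        _ ≤ (M * a ^ (-(1+σ))) * 1 := mul_le_mul_of_nonneg_left hinv1 hMa
        _ = M * a ^ (-(1+σ)) := mul_one _
        _ ≤ M * (δ * t ^ (-σ)) := mul_le_mul_of_nonneg_left hkey hM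
        _ = M * δ * t ^ (-σ) := by ring
    · -- Case (iii): 2a ≤ t
      have hth : s < t/2 := by linarith
      have ht20 : (0:ℝ) < t/2 := by linarith
      have hat2 : a ≤ t/2 := by linarith
      have hth2 : t/2 ≤ t := by linarith
      have hsplitJ : (∫ r in a..(t/2), Real.exp (n*r) * h r)
            + ∫ r in (t/2)..t, Real.exp (n*r) * h r
          = ∫ r in a..t, Real.exp (n*r) * h r :=
        intervalIntegral.integral_add_adjacent_intervals
          (ii_of_gt hce ha_gt hth) (ii_of_gt hce hth ht)
      -- piece 1
      have hb1 : |∫ r in a..(t/2), Real.exp (n*r) * h r|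
          ≤ ∫ r in a..(t/2), (Real.exp (n*(t/2)) * M) * r ^ (-(1+σ)) := by
        refine (habs_le hat2).trans (intervalIntegral.integral_mono_on hat2 (hiig ha_gt hth)
          ((hii_rpow ha_gt hth).const_mul _) (fun x hx => ?_))
        obtain ⟨hx1, hx2⟩ := hx
        have hxgt : s < x := lt_of_lt_of_le ha_gt hx1
        rw [abs_mul, Real.abs_exp]
        have e1 : Real.exp (n*x) ≤ Real.exp (n*(t/2)) :=
          Real.exp_le_exp.mpr (mul_le_mul_of_nonneg_left hx2 hn0.le)
        have e2 : |h x| ≤ M * x ^ (-(1+σ)) := hbd x hxgt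
        calc Real.exp (n*x) * |h x| ≤ Real.exp (n*(t/2)) * (M * x ^ (-(1+σ))) :=
              mul_le_mul e1 e2 (abs_nonneg _) (Real.exp_pos _).le
          _ = (Real.exp (n*(t/2)) * M) * x ^ (-(1+σ)) := by ring
      have hintv : ∫ r in a..(t/2), (r:ℝ) ^ (-(1+σ)) ≤ 1/σ := by
        rw [integral_rpow (Or.inr ⟨by linarith, by
          rw [Set.uIcc_of_le hat2]; rintro ⟨h0a, -⟩; linarith⟩)]
        rw [show -(1+σ)+1 = -σ by ring]
        have h1 : a ^ (-σ) ≤ 1 := Real.rpow_le_one_of_one_le_of_nonpos ha1 (by linarith)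
        have h2 : (0:ℝ) ≤ (t/2) ^ (-σ) := (Real.rpow_pos_of_pos ht20 _).le
        have heq : ((t/2:ℝ)^(-σ) - a^(-σ))/(-σ) = (a^(-σ) - (t/2:ℝ)^(-σ))/σ := by
          rw [div_neg, ← neg_div, neg_sub]
        rw [heq]
        gcongr
        linarith
      have hb1v : |∫ r in a..(t/2), Real.exp (n*r) * h r| ≤ (Real.exp (n*(t/2)) * M) * (1/σ) := by
        refine hb1.trans ?_
        rw [intervalIntegral.integral_const_mul]
        exact mul_le_mul_of_nonneg_left hintv (by positivity)
      have hee : Real.exp (-(n*t)) * Real.exp (n*(t/2)) = Real.exp (-(n/2)*t) := by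
        rw [← Real.exp_add, show -(n*t)+n*(t/2) = -(n/2)*t by ring]
      have he2 : Real.exp (-(n/2)*t) ≤ (σ*δ/2) * t^(-σ) := by
        have h1 : t^σ * t^(-σ) = 1 := by
          rw [← Real.rpow_add ht0]; simp
        have h2 := hP2 t ht.le
        calc Real.exp (-(n/2)*t) = (t^σ * Real.exp (-(n/2)*t)) * t^(-σ) := by
              rw [show (t^σ * Real.exp (-(n/2)*t)) * t^(-σ)
                  = (t^σ * t^(-σ)) * Real.exp (-(n/2)*t) by ring, h1, one_mul]
          _ ≤ (σ*δ/2) * t^(-σ) := mul_le_mul_of_nonneg_right h2 htneg.le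
      have hA : (1/n) * (Real.exp (-(n*t)) * |∫ r in a..(t/2), Real.exp (n*r) * h r|)
          ≤ M * (δ/2) * t^(-σ) := by
        calc (1/n) * (Real.exp (-(n*t)) * |∫ r in a..(t/2), Real.exp (n*r) * h r|)
            ≤ 1 * (Real.exp (-(n*t)) * ((Real.exp (n*(t/2)) * M) * (1/σ))) := by
              apply mul_le_mul hinv1 (mul_le_mul_of_nonneg_left hb1v hexp0.le)
                (by positivity) one_pos.le
          _ = (M/σ) * (Real.exp (-(n*t)) * Real.exp (n*(t/2))) := by ring
          _ = (M/σ) * Real.exp (-(n/2)*t) := by rw [hee]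
          _ ≤ (M/σ) * ((σ*δ/2) * t^(-σ)) :=
              mul_le_mul_of_nonneg_left he2 (by positivity)
          _ = M * (δ/2) * t^(-σ) := by field_simp
      -- piece 2
      have hb2 : |∫ r in (t/2)..t, Real.exp (n*r) * h r|
          ≤ (M * (t/2) ^ (-(1+σ))) * ((Real.exp (n*t) - Real.exp (n*(t/2)))/n) := by
        refine (habs_le hth2).trans ?_
        have hmono : ∫ r in (t/2)..t, |Real.exp (n*r) * h r|
            ≤ ∫ r in (t/2)..t, (M * (t/2) ^ (-(1+σ))) * Real.exp (n*r) := by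
          refine intervalIntegral.integral_mono_on hth2 (hiig hth ht)
            ((hii_exp _ _).const_mul _) (fun x hx => ?_)
          obtain ⟨hx1, _⟩ := hx
          have hxgt : s < x := lt_of_lt_of_le hth hx1
          rw [abs_mul, Real.abs_exp]
          have e2 : |h x| ≤ M * (t/2) ^ (-(1+σ)) :=
            (hbd x hxgt).trans (mul_le_mul_of_nonneg_left
              (Real.rpow_le_rpow_of_nonpos ht20 hx1 (by linarith)) hM)
          calc Real.exp (n*x) * |h x| ≤ Real.exp (n*x) * (M * (t/2) ^ (-(1+σ))) :=
                mul_le_mul_of_nonneg_left e2 (Real.exp_pos _).le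
            _ = (M * (t/2) ^ (-(1+σ))) * Real.exp (n*x) := by ring
        refine hmono.trans_eq ?_
        rw [intervalIntegral.integral_const_mul, integral_exp_mul' hn0]
      have hexpfac2 : Real.exp (-(n*t)) * ((Real.exp (n*t) - Real.exp (n*(t/2)))/n) ≤ 1/n := by
        have heq : Real.exp (-(n*t)) * ((Real.exp (n*t) - Real.exp (n*(t/2)))/n)
            = (Real.exp (-(n*t)) * Real.exp (n*t) - Real.exp (-(n*t)) * Real.exp (n*(t/2)))/n := by
          ring
        rw [heq, hcancel]
        have h2 : 0 ≤ Real.exp (-(n*t)) * Real.exp (n*(t/2)) := by positivity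
        gcongr
        linarith
      have h2σ1 : (0:ℝ) < 2 ^ (1+σ) := Real.rpow_pos_of_pos two_pos _
      have hkey2 : (t/2) ^ (-(1+σ)) ≤ (δ/2) * t^(-σ) := by
        have hdiv : ((t:ℝ)/2) ^ (-(1+σ)) = t ^ (-(1+σ)) / 2 ^ (-(1+σ)) :=
          Real.div_rpow ht0.le (by norm_num : (0:ℝ) ≤ 2) (-(1+σ))
        have h2neg : (2:ℝ) ^ (-(1+σ)) = ((2:ℝ) ^ (1+σ))⁻¹ := Real.rpow_neg (by norm_num) _
        have heq : ((t:ℝ)/2) ^ (-(1+σ)) = (2 ^ (1+σ) / t) * t ^ (-σ) := by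
          rw [hdiv, h2neg, rpow_split ht0]
          field_simp
        rw [heq]
        refine mul_le_mul_of_nonneg_right ?_ htneg.le
        calc (2:ℝ) ^ (1+σ) / t ≤ 2 ^ (1+σ) / s :=
              div_le_div_of_nonneg_left h2σ1.le hs0 ht.le
          _ ≤ δ/2 := hP5
      have hB : (1/n) * (Real.exp (-(n*t)) * |∫ r in (t/2)..t, Real.exp (n*r) * h r|)
          ≤ M * (δ/2) * t^(-σ) := by
        have hMt : (0:ℝ) ≤ M * (t/2) ^ (-(1+σ)) := by positivity
        calc (1/n) * (Real.exp (-(n*t)) * |∫ r in (t/2)..t, Real.exp (n*r) * h r|)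
            ≤ 1 * (Real.exp (-(n*t)) * ((M * (t/2) ^ (-(1+σ)))
                * ((Real.exp (n*t) - Real.exp (n*(t/2)))/n))) := by
              apply mul_le_mul hinv1 (mul_le_mul_of_nonneg_left hb2 hexp0.le)
                (by positivity) one_pos.le
          _ = (M * (t/2) ^ (-(1+σ)))
                * (Real.exp (-(n*t)) * ((Real.exp (n*t) - Real.exp (n*(t/2)))/n)) := by ring
          _ ≤ (M * (t/2) ^ (-(1+σ))) * (1/n) := mul_le_mul_of_nonneg_left hexpfac2 hMt
          _ ≤ (M * (t/2) ^ (-(1+σ))) * 1 := mul_le_mul_of_nonneg_left hinv1 hMt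
          _ = M * (t/2) ^ (-(1+σ)) := mul_one _
          _ ≤ M * ((δ/2) * t^(-σ)) := mul_le_mul_of_nonneg_left hkey2 hM
          _ = M * (δ/2) * t^(-σ) := by ring
      -- combine
      have htri : |∫ r in a..t, Real.exp (n*r) * h r|
          ≤ |∫ r in a..(t/2), Real.exp (n*r) * h r| + |∫ r in (t/2)..t, Real.exp (n*r) * h r| := by
        rw [← hsplitJ]; exact abs_add_le _ _
      calc (1/n) * (Real.exp (-(n*t)) * |∫ r in a..t, Real.exp (n*r) * h r|)
          ≤ (1/n) * (Real.exp (-(n*t)) * (|∫ r in a..(t/2), Real.exp (n*r) * h r|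
              + |∫ r in (t/2)..t, Real.exp (n*r) * h r|)) := by
            apply mul_le_mul_of_nonneg_left (mul_le_mul_of_nonneg_left htri hexp0.le) hinv0.le
        _ = (1/n) * (Real.exp (-(n*t)) * |∫ r in a..(t/2), Real.exp (n*r) * h r|)
              + (1/n) * (Real.exp (-(n*t)) * |∫ r in (t/2)..t, Real.exp (n*r) * h r|) := by ring
        _ ≤ M * (δ/2) * t^(-σ) + M * (δ/2) * t^(-σ) := add_le_add hA hB
        _ = M * δ * t ^ (-σ) := by ring
lemma solOp_est (hn : 1 ≤ n) (hσ : 0 < σ) (hM : 0 ≤ M) {δ : ℝ} (hδ : 0 < δ)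
    (hcont : ContinuousOn h (Set.Ioi s))
    (hbd : ∀ r, s < r → |h r| ≤ M * r ^ (-(1+σ)))
    (hs1 : 1 ≤ s)
    (hP2 : ∀ x, s ≤ x → x ^ σ * Real.exp (-(n/2) * x) ≤ σ * δ / 2)
    (hP3 : Real.exp n / s ≤ δ)
    (hP4 : (2:ℝ) ^ σ / s ≤ δ)
    (hP5 : (2:ℝ) ^ (1+σ) / s ≤ δ / 2)
    {t : ℝ} (ht : s < t) :
    |solOp n (s+1) h t| ≤ M * (1/(n*σ) + δ) * t ^ (-σ) := by
  have hn0 : (0:ℝ) < n := lt_of_lt_of_le one_pos hn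
  have hs0 : (0:ℝ) < s := lt_of_lt_of_le one_pos hs1
  have ht0 : (0:ℝ) < t := hs0.trans ht
  have ha_gt : s < s + 1 := by linarith
  have hinv0 : (0:ℝ) < 1/n := by positivity
  have hexp0 : (0:ℝ) < Real.exp (-(n*t)) := Real.exp_pos _
  have hmain : |(∫ r in Set.Ioi (s+1), h r) - ∫ r in (s+1)..t, h r| ≤ M * (t ^ (-σ)/σ) := by
    rw [integral_Ioi_split hσ hs0 hcont hbd ha_gt ht]
    have hb : ‖∫ r in Set.Ioi t, h r‖ ≤ ∫ r in Set.Ioi t, M * r ^ (-(1+σ)) := by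
      refine MeasureTheory.norm_integral_le_of_norm_le
        ((integrableOn_Ioi_rpow_of_lt (by linarith) ht0).const_mul M) ?_
      refine (ae_restrict_iff' measurableSet_Ioi).mpr (ae_of_all _ fun r hr => ?_)
      rw [Real.norm_eq_abs]; exact hbd r (ht.trans hr)
    rw [Real.norm_eq_abs] at hb
    calc |∫ r in Set.Ioi t, h r| ≤ ∫ r in Set.Ioi t, M * r ^ (-(1+σ)) := hb
      _ = M * (t ^ (-σ)/σ) := by
          rw [MeasureTheory.integral_const_mul, integral_rpow_Ioi hσ ht0]
  have hJ := J_est hn hσ hM hδ hcont hbd hs1 hP2 hP3 hP4 hP5 ht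
  have habs1 : |(-(1/n)) * ((∫ r in Set.Ioi (s+1), h r) - ∫ r in (s+1)..t, h r)|
      = (1/n) * |(∫ r in Set.Ioi (s+1), h r) - ∫ r in (s+1)..t, h r| := by
    rw [abs_mul, abs_neg, abs_of_pos hinv0]
  have habs2 : |(1/n) * (Real.exp (-(n*t)) * ∫ r in (s+1)..t, Real.exp (n*r) * h r)|
      = (1/n) * (Real.exp (-(n*t)) * |∫ r in (s+1)..t, Real.exp (n*r) * h r|) := by
    rw [abs_mul, abs_of_pos hinv0, abs_mul, Real.abs_exp]
  calc |solOp n (s+1) h t|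
      ≤ |(-(1/n)) * ((∫ r in Set.Ioi (s+1), h r) - ∫ r in (s+1)..t, h r)|
        + |(1/n) * (Real.exp (-(n*t)) * ∫ r in (s+1)..t, Real.exp (n*r) * h r)| := by
        apply abs_sub _ _
    _ = (1/n) * |(∫ r in Set.Ioi (s+1), h r) - ∫ r in (s+1)..t, h r|
        + (1/n) * (Real.exp (-(n*t)) * |∫ r in (s+1)..t, Real.exp (n*r) * h r|) := by
        rw [habs1, habs2]
    _ ≤ (1/n) * (M * (t ^ (-σ)/σ)) + M * δ * t ^ (-σ) :=
        add_le_add (mul_le_mul_of_nonneg_left hmain hinv0.le) hJ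
    _ = M * (1/(n*σ) + δ) * t ^ (-σ) := by field_simp

lemma solOp_sub {h₁ h₂ : ℝ → ℝ} {M₁ M₂ : ℝ} (hσ : 0 < σ) (hs0 : 0 < s)
    (hc1 : ContinuousOn h₁ (Set.Ioi s)) (hc2 : ContinuousOn h₂ (Set.Ioi s))
    (hb1 : ∀ r, s < r → |h₁ r| ≤ M₁ * r ^ (-(1+σ)))
    (hb2 : ∀ r, s < r → |h₂ r| ≤ M₂ * r ^ (-(1+σ)))
    {t : ℝ} (ht : s < t) :
    solOp n (s+1) h₁ t - solOp n (s+1) h₂ t = solOp n (s+1) (fun r => h₁ r - h₂ r) t := by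
  have ha_gt : s < s + 1 := by linarith
  have e1 : (∫ r in Set.Ioi (s+1), (h₁ r - h₂ r))
      = (∫ r in Set.Ioi (s+1), h₁ r) - ∫ r in Set.Ioi (s+1), h₂ r :=
    MeasureTheory.integral_sub (integrableOn_of_bound hσ hs0 hc1 hb1 ha_gt)
      (integrableOn_of_bound hσ hs0 hc2 hb2 ha_gt)
  have e2 : (∫ r in (s+1)..t, (h₁ r - h₂ r))
      = (∫ r in (s+1)..t, h₁ r) - ∫ r in (s+1)..t, h₂ r :=
    intervalIntegral.integral_sub (ii_of_gt hc1 ha_gt ht) (ii_of_gt hc2 ha_gt ht)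
  have e3 : (∫ r in (s+1)..t, Real.exp (n*r) * (h₁ r - h₂ r))
      = (∫ r in (s+1)..t, Real.exp (n*r) * h₁ r) - ∫ r in (s+1)..t, Real.exp (n*r) * h₂ r := by
    rw [← intervalIntegral.integral_sub (ii_of_gt (contOn_exp_mul hc1) ha_gt ht)
      (ii_of_gt (contOn_exp_mul hc2) ha_gt ht)]
    exact intervalIntegral.integral_congr fun r _ => by ring
  unfold solOp
  rw [e1, e2, e3]
  ring

lemma contOn_solOp (hn : n ≠ 0) (hcont : ContinuousOn h (Set.Ioi s)) :
    ContinuousOn (solOp n (s+1) h) (Set.Ioi s) :=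
  fun t ht => ((hasDerivAt_solOp hn hcont (by linarith [Set.mem_Ioi.mp ht] : s < s+1)
    ht).continuousAt).continuousWithinAt


end Stmt10Aux

set_option maxHeartbeats 2000000 in
/-- Lemma 2.2: for `σ > (N-1)/2` there are `t_σ, c_σ > 0` such that
for all `t* > t_σ` and every continuous `g` on `(t*,∞)` with `sup t^{1+σ}|g| ≤ B`, the
ODE `f'' + N f' + (N(N-1)/2) f/t = g` has a solution with `sup t^σ |f| ≤ c_σ B`. -/
theorem stmt10 (N : ℕ) (hN : 2 ≤ N) (σ : ℝ) (hσ : ((N : ℝ) - 1) / 2 < σ) :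
    ∃ tσ : ℝ, 0 < tσ ∧ ∃ cσ : ℝ, 0 < cσ ∧
    ∀ tstar : ℝ, tσ < tstar →
    ∀ g : ℝ → ℝ, ContinuousOn g (Ioi tstar) →
    ∀ B : ℝ, (∀ t : ℝ, tstar < t → t ^ (1 + σ) * |g t| ≤ B) →
    ∃ f : ℝ → ℝ,
      ContDiffOn ℝ 2 f (Ioi tstar) ∧
      (∀ t : ℝ, tstar < t →
        deriv (deriv f) t + (N : ℝ) * deriv f t + ((N : ℝ) * ((N : ℝ) - 1) / 2) * f t / t
          = g t) ∧
      (∀ t : ℝ, tstar < t → t ^ σ * |f t| ≤ cσ * B) := by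
  have hn2 : (2:ℝ) ≤ (N:ℝ) := by exact_mod_cast hN
  set n : ℝ := (N:ℝ) with hn_def
  have hn1 : (1:ℝ) ≤ n := by linarith
  have hn0 : (0:ℝ) < n := by linarith
  have hσ0 : 0 < σ := lt_of_le_of_lt (by linarith : (0:ℝ) ≤ (n-1)/2) hσ
  set c : ℝ := n * (n-1)/2 with hc_def
  have hc0 : 0 < c := by rw [hc_def]; nlinarith
  set ρ : ℝ := (n-1)/(2*σ) with hρ_def
  have hρ0 : 0 ≤ ρ := by
    rw [hρ_def]; exact div_nonneg (by linarith) (by linarith)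
  have hρ1 : ρ < 1 := by rw [hρ_def, div_lt_one (by linarith)]; linarith
  set δ : ℝ := (1 - ρ)/(2*c) with hδ_def
  have hδ0 : 0 < δ := by rw [hδ_def]; exact div_pos (by linarith) (by linarith)
  set K : ℝ := 1/(n*σ) + δ with hK_def
  have hK0 : 0 < K := by
    rw [hK_def]
    have : (0:ℝ) < 1/(n*σ) := div_pos one_pos (mul_pos hn0 hσ0)
    linarith
  set q : ℝ := c * K with hq_def
  have hqρ : q = (1 + ρ)/2 := by
    have e1 : c * (1/(n*σ)) = ρ := by
      rw [hc_def, hρ_def]; field_simp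
    have e2 : c * δ = (1-ρ)/2 := by
      rw [hδ_def]; field_simp
    rw [hq_def, hK_def, mul_add, e1, e2]; ring
  have hq1 : q < 1 := by rw [hqρ]; linarith
  have hq0 : 0 ≤ q := by rw [hq_def]; exact mul_nonneg hc0.le hK0.le
  set cσv : ℝ := K/(1-q) with hcσ_def
  have hcσ0 : 0 < cσv := div_pos hK0 (by linarith)
  have htend := tendsto_rpow_mul_exp_neg_mul_atTop_nhds_zero σ (n/2) (by linarith)
  have hev : ∀ᶠ x in Filter.atTop, x ^ σ * Real.exp (-(n/2)*x) < σ*δ/2 :=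
    htend.eventually (gt_mem_nhds (div_pos (mul_pos hσ0 hδ0) two_pos))
  obtain ⟨T, hT⟩ := Filter.eventually_atTop.mp hev
  set R : ℝ := (Real.exp n + 2^σ + 2^(1+σ)*2)/δ with hR_def
  set tσ' : ℝ := max T (max 1 R) with htσ_def
  have htσ1 : (1:ℝ) ≤ tσ' := le_trans (le_max_left 1 R) (le_max_right T _)
  refine ⟨tσ', by linarith, cσv, hcσ0, ?_⟩
  intro tstar htstar g hg B hB
  have hs1 : (1:ℝ) ≤ tstar := le_trans htσ1 htstar.le
  have hs0 : (0:ℝ) < tstar := by linarith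
  have hRs : R ≤ tstar := le_trans (le_trans (le_max_right 1 R) (le_max_right T _)) htstar.le
  have hTs : T ≤ tstar := le_trans (le_max_left T _) htstar.le
  have h2σpos : (0:ℝ) < 2^σ := Real.rpow_pos_of_pos two_pos σ
  have h2σ1pos : (0:ℝ) < 2^(1+σ) := Real.rpow_pos_of_pos two_pos _
  have hRδ : Real.exp n + 2^σ + 2^(1+σ)*2 ≤ δ * tstar := by
    rw [hR_def, div_le_iff₀ hδ0] at hRs
    linarith [mul_comm tstar δ]
  have hP2 : ∀ x, tstar ≤ x → x ^ σ * Real.exp (-(n/2) * x) ≤ σ * δ / 2 :=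
    fun x hx => (hT x (le_trans hTs hx)).le
  have hP3 : Real.exp n / tstar ≤ δ := by rw [div_le_iff₀ hs0]; linarith
  have hP4 : (2:ℝ)^σ / tstar ≤ δ := by
    rw [div_le_iff₀ hs0]; linarith [Real.exp_pos n]
  have hP5 : (2:ℝ)^(1+σ) / tstar ≤ δ/2 := by
    rw [div_le_iff₀ hs0]; linarith [Real.exp_pos n]
  have hB0 : 0 ≤ B := le_trans (by positivity) (hB (tstar+1) (by linarith))
  -- the fixed point setup
  set fe : BoundedContinuousFunction (↥(Set.Ioi tstar)) ℝ → ℝ → ℝ :=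
    fun F r => if hr : tstar < r then F ⟨r, hr⟩ else 0 with hfe_def
  have hfe_cont : ∀ F, ContinuousOn (fe F) (Set.Ioi tstar) := by
    intro F
    rw [continuousOn_iff_continuous_restrict]
    have hre : (Set.Ioi tstar).restrict (fe F) = F := by
      funext x
      simp only [Set.restrict_apply, hfe_def]
      exact dif_pos x.2
    change Continuous ((Set.Ioi tstar).restrict (fe F))
    rw [hre]
    exact F.continuous
  have hfe_bd : ∀ F r, |fe F r| ≤ ‖F‖ := by
    intro F r
    by_cases hr : tstar < r
    · simp only [hfe_def, dif_pos hr]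
      have := F.norm_coe_le_norm ⟨r, hr⟩
      rwa [Real.norm_eq_abs] at this
    · simp only [hfe_def, dif_neg hr, abs_zero]
      exact norm_nonneg F
  have hfe_dist : ∀ F G r, tstar < r → |fe F r - fe G r| ≤ dist F G := by
    intro F G r hr
    simp only [hfe_def, dif_pos hr]
    have := BoundedContinuousFunction.dist_coe_le_dist (f := F) (g := G) ⟨r, hr⟩
    rwa [Real.dist_eq] at this
  set hh : BoundedContinuousFunction (↥(Set.Ioi tstar)) ℝ → ℝ → ℝ :=
    fun F r => g r - c * (r ^ (-(1+σ)) * fe F r) with hhh_def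
  have hsub0 : Set.Ioi tstar ⊆ {x : ℝ | x ≠ 0} := fun x hx =>
    ne_of_gt (hs0.trans hx)
  have hh_cont : ∀ F, ContinuousOn (hh F) (Set.Ioi tstar) := fun F =>
    hg.sub (continuousOn_const.mul
      (((contOn_rpow_ne (-(1+σ))).mono hsub0).mul (hfe_cont F)))
  have hh_bd : ∀ F r, tstar < r → |hh F r| ≤ (B + c*‖F‖) * r ^ (-(1+σ)) := by
    intro F r hr
    have hr0 : 0 < r := hs0.trans hr
    have hp : 0 < r ^ (-(1+σ)) := Real.rpow_pos_of_pos hr0 _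
    have hgb : |g r| ≤ B * r ^ (-(1+σ)) := by
      have hprod : r^(1+σ) * r^(-(1+σ)) = 1 := by
        rw [← Real.rpow_add hr0, show (1+σ) + -(1+σ) = 0 by ring, Real.rpow_zero]
      calc |g r| = (r^(1+σ) * |g r|) * r^(-(1+σ)) := by
            rw [show (r^(1+σ) * |g r|) * r^(-(1+σ)) = (r^(1+σ) * r^(-(1+σ))) * |g r| by ring,
              hprod, one_mul]
        _ ≤ B * r^(-(1+σ)) := mul_le_mul_of_nonneg_right (hB r hr) hp.le
    calc |hh F r| ≤ |g r| + |c * (r ^ (-(1+σ)) * fe F r)| := abs_sub _ _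
      _ = |g r| + c * (r ^ (-(1+σ)) * |fe F r|) := by
          rw [abs_mul, abs_mul, abs_of_pos hc0, abs_of_pos hp]
      _ ≤ B * r^(-(1+σ)) + c * (r ^ (-(1+σ)) * ‖F‖) :=
          add_le_add hgb (mul_le_mul_of_nonneg_left
            (mul_le_mul_of_nonneg_left (hfe_bd F r) hp.le) hc0.le)
      _ = (B + c*‖F‖) * r ^ (-(1+σ)) := by ring
  have hΦcont : ∀ F, Continuous fun x : ↥(Set.Ioi tstar) =>
      (x:ℝ)^σ * solOp n (tstar+1) (hh F) x := by
    intro F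
    have h1 : ContinuousOn (fun u : ℝ => u^σ * solOp n (tstar+1) (hh F) u) (Set.Ioi tstar) :=
      ((contOn_rpow_ne σ).mono hsub0).mul (contOn_solOp hn0.ne' (hh_cont F))
    exact continuousOn_iff_continuous_restrict.mp h1
  have hΦbound : ∀ F (x : ↥(Set.Ioi tstar)),
      ‖(x:ℝ)^σ * solOp n (tstar+1) (hh F) x‖ ≤ (B + c*‖F‖) * K := by
    intro F x
    have hx : tstar < (x:ℝ) := x.2
    have hx0 : (0:ℝ) < (x:ℝ) := hs0.trans hx
    have hM0 : 0 ≤ B + c*‖F‖ := add_nonneg hB0 (mul_nonneg hc0.le (norm_nonneg F))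
    have hso := solOp_est hn1 hσ0 hM0 hδ0 (hh_cont F) (hh_bd F) hs1 hP2 hP3 hP4 hP5 hx
    have hprod : (x:ℝ)^σ * (x:ℝ)^(-σ) = 1 := by rw [← Real.rpow_add hx0]; simp
    have hxσ : (0:ℝ) < (x:ℝ)^σ := Real.rpow_pos_of_pos hx0 _
    rw [Real.norm_eq_abs, abs_mul, abs_of_pos hxσ]
    calc (x:ℝ)^σ * |solOp n (tstar+1) (hh F) x|
        ≤ (x:ℝ)^σ * ((B + c*‖F‖) * (1/(n*σ) + δ) * (x:ℝ)^(-σ)) :=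
          mul_le_mul_of_nonneg_left hso hxσ.le
      _ = ((x:ℝ)^σ * (x:ℝ)^(-σ)) * ((B + c*‖F‖) * (1/(n*σ) + δ)) := by ring
      _ = (B + c*‖F‖) * K := by rw [hprod, one_mul, hK_def]
  set Φ : BoundedContinuousFunction (↥(Set.Ioi tstar)) ℝ →
      BoundedContinuousFunction (↥(Set.Ioi tstar)) ℝ :=
    fun F => BoundedContinuousFunction.ofNormedAddCommGroup _ (hΦcont F) _ (hΦbound F)
    with hΦ_def
  have hlip : ∀ F G, dist (Φ F) (Φ G) ≤ q * dist F G := by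
    intro F G
    refine (BoundedContinuousFunction.dist_le (mul_nonneg hq0 dist_nonneg)).mpr fun x => ?_
    have hx : tstar < (x:ℝ) := x.2
    have hx0 : (0:ℝ) < (x:ℝ) := hs0.trans hx
    have hxσ : (0:ℝ) < (x:ℝ)^σ := Real.rpow_pos_of_pos hx0 _
    have hprodx : (x:ℝ)^σ * (x:ℝ)^(-σ) = 1 := by rw [← Real.rpow_add hx0]; simp
    have hψc : ContinuousOn (fun r => hh F r - hh G r) (Set.Ioi tstar) :=
      (hh_cont F).sub (hh_cont G)
    have hψb : ∀ r, tstar < r → |hh F r - hh G r| ≤ (c * dist F G) * r ^ (-(1+σ)) := by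
      intro r hr
      have hr0 : 0 < r := hs0.trans hr
      have hp : 0 < r ^ (-(1+σ)) := Real.rpow_pos_of_pos hr0 _
      have heq : hh F r - hh G r = c * (r ^ (-(1+σ)) * (fe G r - fe F r)) := by
        simp only [hhh_def]; ring
      rw [heq, abs_mul, abs_mul, abs_of_pos hc0, abs_of_pos hp, abs_sub_comm]
      calc c * (r ^ (-(1+σ)) * |fe F r - fe G r|)
          ≤ c * (r ^ (-(1+σ)) * dist F G) :=
            mul_le_mul_of_nonneg_left
              (mul_le_mul_of_nonneg_left (hfe_dist F G r hr) hp.le) hc0.le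
        _ = (c * dist F G) * r ^ (-(1+σ)) := by ring
    have hso := solOp_est hn1 hσ0 (mul_nonneg hc0.le dist_nonneg) hδ0
      hψc hψb hs1 hP2 hP3 hP4 hP5 hx
    have hsubeq := solOp_sub (n := n) (h₁ := hh F) (h₂ := hh G) hσ0 hs0
      (hh_cont F) (hh_cont G) (hh_bd F) (hh_bd G) hx
    have hΦF : (Φ F) x = (x:ℝ)^σ * solOp n (tstar+1) (hh F) x := by
      simp only [hΦ_def, BoundedContinuousFunction.coe_ofNormedAddCommGroup]
    have hΦG : (Φ G) x = (x:ℝ)^σ * solOp n (tstar+1) (hh G) x := by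
      simp only [hΦ_def, BoundedContinuousFunction.coe_ofNormedAddCommGroup]
    rw [Real.dist_eq, hΦF, hΦG, ← mul_sub, abs_mul, abs_of_pos hxσ, hsubeq]
    calc (x:ℝ)^σ * |solOp n (tstar+1) (fun r => hh F r - hh G r) x|
        ≤ (x:ℝ)^σ * ((c * dist F G) * (1/(n*σ) + δ) * (x:ℝ)^(-σ)) :=
          mul_le_mul_of_nonneg_left hso hxσ.le
      _ = ((x:ℝ)^σ * (x:ℝ)^(-σ)) * ((c * (1/(n*σ) + δ)) * dist F G) := by ring
      _ = q * dist F G := by rw [hprodx, one_mul, hq_def, hK_def]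
  have hqcoe : ((Real.toNNReal q : NNReal) : ℝ) = q := Real.coe_toNNReal _ hq0
  have hcontraction : ContractingWith (Real.toNNReal q) Φ := by
    constructor
    · have h1 : ((Real.toNNReal q : NNReal) : ℝ) < ((1 : NNReal) : ℝ) := by
        rw [hqcoe, NNReal.coe_one]; exact hq1
      exact_mod_cast h1
    · refine LipschitzWith.of_dist_le_mul fun F G => ?_
      rw [hqcoe]
      exact hlip F G
  obtain ⟨Fst, hfix⟩ : ∃ F, Φ F = F :=
    ⟨ContractingWith.fixedPoint Φ hcontraction, hcontraction.fixedPoint_isFixedPt⟩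
  have hnormΦ : ‖Φ Fst‖ ≤ (B + c*‖Fst‖) * K := by
    simp only [hΦ_def]
    exact BoundedContinuousFunction.norm_ofNormedAddCommGroup_le _
      (mul_nonneg (add_nonneg hB0 (mul_nonneg hc0.le (norm_nonneg Fst))) hK0.le) _
  rw [hfix] at hnormΦ
  have hFstnorm : ‖Fst‖ ≤ cσv * B := by
    have h4 : (B + c*‖Fst‖)*K = K*B + q*‖Fst‖ := by rw [hq_def]; ring
    have h5 : ‖Fst‖ * (1 - q) ≤ K * B := by nlinarith
    rw [hcσ_def, div_mul_eq_mul_div, le_div_iff₀ (by linarith)]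
    linarith
  have hpoint : ∀ (x : ↥(Set.Ioi tstar)),
      (x:ℝ)^σ * solOp n (tstar+1) (hh Fst) x = Fst x := by
    intro x
    conv_rhs => rw [← hfix]
    simp only [hΦ_def, BoundedContinuousFunction.coe_ofNormedAddCommGroup]
  have hfe_eq : ∀ r (hr : tstar < r),
      fe Fst r = r^σ * solOp n (tstar+1) (hh Fst) r := by
    intro r hr
    simp only [hfe_def, dif_pos hr]
    exact (hpoint ⟨r, hr⟩).symm
  have hhc := hh_cont Fst
  have ha_gt : tstar < tstar + 1 := by linarith
  have hder : ∀ u, tstar < u → HasDerivAt (solOp n (tstar+1) (hh Fst))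
      (Real.exp (-(n*u)) * ∫ r in (tstar+1)..u, Real.exp (n*r) * hh Fst r) u :=
    fun u hu => hasDerivAt_solOp hn0.ne' hhc ha_gt hu
  refine ⟨solOp n (tstar+1) (hh Fst), ?_, ?_, ?_⟩
  · -- C²
    have hdiff : DifferentiableOn ℝ (solOp n (tstar+1) (hh Fst)) (Set.Ioi tstar) :=
      fun u hu => ((hder u hu).differentiableAt).differentiableWithinAt
    have hvcont : ContinuousOn (fun u =>
        Real.exp (-(n*u)) * ∫ r in (tstar+1)..u, Real.exp (n*r) * hh Fst r) (Set.Ioi tstar) :=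
      fun u hu => ((hasDerivAt_v (n := n) hhc ha_gt hu).continuousAt).continuousWithinAt
    have hvdiff : DifferentiableOn ℝ (fun u =>
        Real.exp (-(n*u)) * ∫ r in (tstar+1)..u, Real.exp (n*r) * hh Fst r) (Set.Ioi tstar) :=
      fun u hu => ((hasDerivAt_v (n := n) hhc ha_gt hu).differentiableAt).differentiableWithinAt
    have hv1 : ContDiffOn ℝ 1 (fun u =>
        Real.exp (-(n*u)) * ∫ r in (tstar+1)..u, Real.exp (n*r) * hh Fst r) (Set.Ioi tstar) := by
      rw [show (1 : WithTop ℕ∞) = 0 + 1 by norm_num]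
      refine (contDiffOn_succ_iff_deriv_of_isOpen isOpen_Ioi).mpr ⟨hvdiff, by simp, ?_⟩
      rw [contDiffOn_zero]
      have hw : ContinuousOn (fun u => hh Fst u
          - n * (Real.exp (-(n*u)) * ∫ r in (tstar+1)..u, Real.exp (n*r) * hh Fst r))
          (Set.Ioi tstar) := hhc.sub (continuousOn_const.mul hvcont)
      refine ContinuousOn.congr hw (fun u hu => ?_)
      exact (hasDerivAt_v (n := n) hhc ha_gt hu).deriv
    rw [show (2 : WithTop ℕ∞) = 1 + 1 by norm_num]
    refine (contDiffOn_succ_iff_deriv_of_isOpen isOpen_Ioi).mpr ⟨hdiff, by simp, ?_⟩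
    exact hv1.congr (fun u hu => (hder u hu).deriv)
  · -- the ODE
    intro t ht
    have ht0 : (0:ℝ) < t := hs0.trans ht
    have hev2 : deriv (solOp n (tstar+1) (hh Fst)) =ᶠ[nhds t]
        (fun u => Real.exp (-(n*u)) * ∫ r in (tstar+1)..u, Real.exp (n*r) * hh Fst r) :=
      eventually_of_mem (isOpen_Ioi.mem_nhds ht) (fun u hu => (hder u hu).deriv)
    rw [hev2.deriv_eq, (hasDerivAt_v (n := n) hhc ha_gt ht).deriv, (hder t ht).deriv]
    have hhh_val : hh Fst t = g t - c * (solOp n (tstar+1) (hh Fst) t / t) := by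
      simp only [hhh_def]
      rw [hfe_eq t ht]
      have hpow : t^(-(1+σ)) * t^σ = t⁻¹ := by
        rw [← Real.rpow_add ht0, show -(1+σ)+σ = -1 by ring, Real.rpow_neg_one]
      rw [show t ^ (-(1+σ)) * (t^σ * solOp n (tstar+1) (hh Fst) t)
          = (t^(-(1+σ)) * t^σ) * solOp n (tstar+1) (hh Fst) t by ring, hpow]
      ring
    rw [hhh_val]
    ring
  · -- the estimate
    intro t ht
    have ht0 : (0:ℝ) < t := hs0.trans ht
    have hxσ : (0:ℝ) < t^σ := Real.rpow_pos_of_pos ht0 _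
    calc t^σ * |solOp n (tstar+1) (hh Fst) t| = |t^σ * solOp n (tstar+1) (hh Fst) t| := by
          rw [abs_mul, abs_of_pos hxσ]
      _ = |Fst ⟨t, ht⟩| := by rw [hpoint ⟨t, ht⟩]
      _ ≤ ‖Fst‖ := by
          have := Fst.norm_coe_le_norm ⟨t, ht⟩
          rwa [Real.norm_eq_abs] at this
      _ ≤ cσv * B := hFstnorm
end Stmt10Aux
end
end

section
/- Let N ≥ 1, σ > 0, and t* > 0 satisfy N t* − 1 − σ > 0. Let g : [t*, ∞) → ℝ be continuous with B := sup_{t ≥ t*} t^{1+σ} |g(t)| < ∞. Then the function G(g)(t) := −∫_t^∞ e^{−Nζ} ( ∫_{t*}^ζ e^{Ns} g(s) ds ) dζ is well defined (the integrals converge absolutely) for t ≥ t*, is twice differentiable on (t*, ∞), satisfies (G(g))''(t) + N (G(g))'(t) = g(t) for all t > t*, and obeys the bound sup_{t ≥ t*} t^σ |G(g)(t)| ≤ (1/(N σ)) (1 − (σ+1)/(N t*))^{−1} B. -/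
open MeasureTheory Metric Set Filter Topology
open scoped RealInnerProductSpace ENNReal NNReal

noncomputable section

/-- the explicit right inverse
`G(g)(t) = -∫_t^∞ e^{-Nζ} (∫_{t*}^ζ e^{Ns} g(s) ds) dζ` of `∂_t² + N ∂_t` is well
defined (outer integral absolutely convergent), twice differentiable, solves
`(G g)'' + N (G g)' = g` on `(t*,∞)`, and satisfies the weighted bound
`sup t^σ |G g| ≤ (1/(Nσ)) (1 - (σ+1)/(N t*))⁻¹ B` when `sup t^{1+σ} |g| ≤ B`. -/
theorem stmt11 (N : ℝ) (hN : 1 ≤ N) (σ : ℝ) (hσ : 0 < σ)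
    (tstar : ℝ) (htstar : 0 < tstar) (hNt : 0 < N * tstar - 1 - σ)
    (g : ℝ → ℝ) (hg : ContinuousOn g (Ici tstar))
    (B : ℝ) (hB : ∀ t : ℝ, tstar ≤ t → t ^ (1 + σ) * |g t| ≤ B)
    (G : ℝ → ℝ)
    (hG : ∀ t : ℝ, G t =
      -∫ ζ in Ioi t, Real.exp (-(N * ζ)) * ∫ s in tstar..ζ, Real.exp (N * s) * g s) :
    (∀ t : ℝ, tstar ≤ t →
      IntegrableOn
        (fun ζ => Real.exp (-(N * ζ)) * ∫ s in tstar..ζ, Real.exp (N * s) * g s)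
        (Ioi t) volume) ∧
    (∀ t : ℝ, tstar < t → DifferentiableAt ℝ G t) ∧
    (∀ t : ℝ, tstar < t → DifferentiableAt ℝ (deriv G) t) ∧
    (∀ t : ℝ, tstar < t → deriv (deriv G) t + N * deriv G t = g t) ∧
    (∀ t : ℝ, tstar ≤ t →
      t ^ σ * |G t| ≤ (1 / (N * σ)) * (1 - (σ + 1) / (N * tstar))⁻¹ * B) := by
  have hNpos : 0 < N := lt_of_lt_of_le one_pos hN
  have hNt0 : 0 < N * tstar := mul_pos hNpos htstar
  have hBnn : 0 ≤ B := le_trans (by positivity) (hB tstar le_rfl)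
  set θ : ℝ := (1 + σ) / (N * tstar) with hθdef
  have hθlt : θ < 1 := (div_lt_one hNt0).2 (by linarith)
  have h1θ : 0 < 1 - θ := by linarith
  set C : ℝ := B / (N * (1 - θ)) with hCdef
  have hCnn : 0 ≤ C := div_nonneg hBnn (by positivity)
  set F : ℝ → ℝ := fun ζ => ∫ s in tstar..ζ, Real.exp (N * s) * g s with hFdef
  set h : ℝ → ℝ := fun ζ => Real.exp (-(N * ζ)) * F ζ with hhdef
  have hcont : ContinuousOn (fun s => Real.exp (N * s) * g s) (Ici tstar) :=
    ((Real.continuous_exp.comp (continuous_const.mul continuous_id)).continuousOn).mul hg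
  have huIcc : ∀ a b : ℝ, tstar ≤ a → tstar ≤ b → uIcc a b ⊆ Ici tstar := by
    intro a b ha hb x hx
    exact le_trans (le_inf ha hb) hx.1
  have hii : ∀ a b : ℝ, tstar ≤ a → tstar ≤ b →
      IntervalIntegrable (fun s => Real.exp (N * s) * g s) volume a b := fun a b ha hb =>
    (hcont.mono (huIcc a b ha hb)).intervalIntegrable
  -- derivative of F
  have hF' : ∀ ζ : ℝ, tstar < ζ → HasDerivAt F (Real.exp (N * ζ) * g ζ) ζ := by
    intro ζ hζ
    have hca : ContinuousAt (fun s => Real.exp (N * s) * g s) ζ :=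
      hcont.continuousAt (Ici_mem_nhds hζ)
    exact intervalIntegral.integral_hasDerivAt_right (hii tstar ζ le_rfl hζ.le)
      (ContinuousOn.stronglyMeasurableAtFilter isOpen_Ioi
        (hcont.mono Ioi_subset_Ici_self) ζ hζ) hca
  have hFcont : ContinuousOn F (Ioi tstar) := fun ζ hζ =>
    (hF' ζ hζ).continuousAt.continuousWithinAt
  have hhcont : ContinuousOn h (Ioi tstar) :=
    ((Real.continuous_exp.comp (continuous_const.mul continuous_id).neg).continuousOn).mul hFcont
  -- pointwise bound on g
  have hgb : ∀ s : ℝ, tstar ≤ s → |g s| ≤ B * s ^ (-(1 + σ)) := by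
    intro s hs
    have hs0 : 0 < s := lt_of_lt_of_le htstar hs
    have h1 : (0:ℝ) < s ^ (1 + σ) := Real.rpow_pos_of_pos hs0 _
    have := hB s hs
    rw [Real.rpow_neg hs0.le, ← div_eq_mul_inv]
    exact (le_div_iff₀ h1).2 (by rw [mul_comm]; exact this)
  -- the dominating function
  set φ : ℝ → ℝ := fun x => Real.exp (N * x) * x ^ (-(1 + σ)) with hφdef
  have hφpos : ∀ x : ℝ, 0 < x → 0 < φ x := fun x hx =>
    mul_pos (Real.exp_pos _) (Real.rpow_pos_of_pos hx _)
  have hφ' : ∀ x : ℝ, 0 < x →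
      HasDerivAt φ (N * Real.exp (N * x) * x ^ (-(1 + σ)) +
        Real.exp (N * x) * ((-(1 + σ)) * x ^ (-(1 + σ) - 1))) x := by
    intro x hx
    have he : HasDerivAt (fun y : ℝ => Real.exp (N * y)) (Real.exp (N * x) * N) x := by
      simpa using ((hasDerivAt_id x).const_mul N).exp
    have hr : HasDerivAt (fun y : ℝ => y ^ (-(1 + σ))) ((-(1 + σ)) * x ^ (-(1 + σ) - 1)) x :=
      Real.hasDerivAt_rpow_const (Or.inl hx.ne')
    have := he.mul hr
    exact this.congr_deriv (by ring)
  have hφcont : ContinuousOn φ (Ici tstar) := by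
    intro x hx
    have hx0 : 0 < x := lt_of_lt_of_le htstar hx
    exact (((Real.continuous_exp.comp (continuous_const.mul continuous_id)).continuousAt).mul
      ((Real.continuousAt_rpow_const x _ (Or.inl hx0.ne')))).continuousWithinAt
  have hφii : ∀ a b : ℝ, tstar ≤ a → tstar ≤ b →
      IntervalIntegrable (fun s => B * φ s) volume a b := fun a b ha hb =>
    ((continuousOn_const.mul hφcont).mono (huIcc a b ha hb)).intervalIntegrable
  -- key estimate : the primitive of B * φ is bounded by C * φ
  have hK : ∀ ζ : ℝ, tstar ≤ ζ → (∫ s in tstar..ζ, B * φ s) ≤ C * φ ζ := by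
    intro ζ hζ
    set ψ : ℝ → ℝ := fun x => C * φ x - ∫ s in tstar..x, B * φ s with hψdef
    have hKcont : ContinuousOn (fun x => ∫ s in tstar..x, B * φ s) (Icc tstar ζ) := by
      have : IntegrableOn (fun s => B * φ s) (uIcc tstar ζ) volume :=
        ((continuousOn_const.mul hφcont).mono (huIcc tstar ζ le_rfl hζ)).integrableOn_compact
          isCompact_uIcc
      simpa [uIcc_of_le hζ] using intervalIntegral.continuousOn_primitive_interval this
    have hψcont : ContinuousOn ψ (Icc tstar ζ) :=
      (continuousOn_const.mul (hφcont.mono (fun x hx => hx.1))).sub hKcont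
    have hψd : ∀ x ∈ interior (Icc tstar ζ), HasDerivAt ψ
        (C * (N * Real.exp (N * x) * x ^ (-(1 + σ)) +
          Real.exp (N * x) * ((-(1 + σ)) * x ^ (-(1 + σ) - 1))) - B * φ x) x := by
      rw [interior_Icc]
      intro x hx
      have hx0 : tstar < x := hx.1
      have hca : ContinuousAt (fun s => B * φ s) x :=
        continuousAt_const.mul (hφcont.continuousAt (Ici_mem_nhds hx0))
      have hKd : HasDerivAt (fun x => ∫ s in tstar..x, B * φ s) (B * φ x) x :=
        intervalIntegral.integral_hasDerivAt_right (hφii tstar x le_rfl hx0.le)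
          (ContinuousOn.stronglyMeasurableAtFilter isOpen_Ioi
            ((continuousOn_const.mul hφcont).mono Ioi_subset_Ici_self) x hx0) hca
      exact (((hφ' x (htstar.trans hx0)).const_mul C)).sub hKd
    have hψmono : MonotoneOn ψ (Icc tstar ζ) := by
      apply monotoneOn_of_deriv_nonneg (convex_Icc tstar ζ) hψcont
      · intro x hx
        exact ((hψd x hx).differentiableAt).differentiableWithinAt
      · intro x hx
        rw [(hψd x hx).deriv]
        rw [interior_Icc] at hx
        have hx0 : 0 < x := htstar.trans hx.1
        have hexp : 0 < Real.exp (N * x) := Real.exp_pos _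
        have hrp : 0 < x ^ (-(1 + σ)) := Real.rpow_pos_of_pos hx0 _
        have hsub : x ^ (-(1 + σ) - 1) = x ^ (-(1 + σ)) / x := by
          rw [Real.rpow_sub hx0, Real.rpow_one]
        rw [hsub]
        have hkey : B ≤ C * (N - (1 + σ) / x) := by
          have h1 : N - (1 + σ) / tstar ≤ N - (1 + σ) / x := by
            have : (1 + σ) / x ≤ (1 + σ) / tstar :=
              div_le_div_of_nonneg_left (by linarith) htstar hx.1.le
            linarith
          have h2 : N - (1 + σ) / tstar = N * (1 - θ) := by
            rw [hθdef]; field_simp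
          have h3 : C * (N * (1 - θ)) = B := by
            rw [hCdef]; field_simp
          calc B = C * (N * (1 - θ)) := h3.symm
            _ = C * (N - (1 + σ) / tstar) := by rw [h2]
            _ ≤ C * (N - (1 + σ) / x) := mul_le_mul_of_nonneg_left h1 hCnn
        have hφx : φ x = Real.exp (N * x) * x ^ (-(1 + σ)) := rfl
        have expand : C * (N * Real.exp (N * x) * x ^ (-(1 + σ)) +
            Real.exp (N * x) * (-(1 + σ) * (x ^ (-(1 + σ)) / x))) - B * φ x
            = (Real.exp (N * x) * x ^ (-(1 + σ))) * (C * (N - (1 + σ) / x) - B) := by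
          rw [hφx]; field_simp; ring
        rw [expand]
        have : 0 ≤ C * (N - (1 + σ) / x) - B := by linarith
        positivity
    have h0 : ψ tstar ≤ ψ ζ :=
      hψmono (left_mem_Icc.2 hζ) (right_mem_Icc.2 hζ) hζ
    have : ψ tstar = C * φ tstar := by
      simp [hψdef, intervalIntegral.integral_same]
    rw [this, hψdef] at h0
    have hφt : 0 ≤ C * φ tstar := mul_nonneg hCnn (hφpos tstar htstar).le
    simp only at h0
    linarith
  -- bound on F
  have hFb : ∀ ζ : ℝ, tstar ≤ ζ → |F ζ| ≤ C * φ ζ := by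
    intro ζ hζ
    have step1 : |F ζ| ≤ ∫ s in tstar..ζ, |Real.exp (N * s) * g s| :=
      intervalIntegral.abs_integral_le_integral_abs hζ
    have step2 : (∫ s in tstar..ζ, |Real.exp (N * s) * g s|) ≤ ∫ s in tstar..ζ, B * φ s := by
      apply intervalIntegral.integral_mono_on hζ ((hii tstar ζ le_rfl hζ).abs)
        (hφii tstar ζ le_rfl hζ)
      intro s hs
      have hs0 : 0 < s := lt_of_lt_of_le htstar hs.1
      rw [abs_mul, abs_of_pos (Real.exp_pos _)]
      calc Real.exp (N * s) * |g s| ≤ Real.exp (N * s) * (B * s ^ (-(1 + σ))) :=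
            mul_le_mul_of_nonneg_left (hgb s hs.1) (Real.exp_pos _).le
        _ = B * φ s := by rw [hφdef]; ring
    exact le_trans step1 (le_trans step2 (hK ζ hζ))
  -- bound on h
  have hhb : ∀ ζ : ℝ, tstar ≤ ζ → |h ζ| ≤ C * ζ ^ (-(1 + σ)) := by
    intro ζ hζ
    have hz0 : 0 < ζ := lt_of_lt_of_le htstar hζ
    have : |h ζ| = Real.exp (-(N * ζ)) * |F ζ| := by
      rw [hhdef]; simp [abs_mul, abs_of_pos (Real.exp_pos _)]
    rw [this]
    calc Real.exp (-(N * ζ)) * |F ζ| ≤ Real.exp (-(N * ζ)) * (C * φ ζ) :=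
          mul_le_mul_of_nonneg_left (hFb ζ hζ) (Real.exp_pos _).le
      _ = C * ζ ^ (-(1 + σ)) := by
          rw [hφdef]
          simp only
          rw [Real.exp_neg]
          field_simp
  -- integrability
  have hInt : ∀ t : ℝ, tstar ≤ t → IntegrableOn h (Ioi t) volume := by
    intro t ht
    have ht0 : 0 < t := lt_of_lt_of_le htstar ht
    have hdom : IntegrableOn (fun x : ℝ => C * x ^ (-(1 + σ))) (Ioi t) volume :=
      (integrableOn_Ioi_rpow_of_lt (by linarith) ht0).const_mul C
    apply MeasureTheory.Integrable.mono hdom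
    · exact ((hhcont.mono (Ioi_subset_Ioi ht)).aestronglyMeasurable measurableSet_Ioi)
    · filter_upwards [ae_restrict_mem measurableSet_Ioi] with x hx
      have hx' : tstar ≤ x := le_of_lt (lt_of_le_of_lt ht hx)
      have hx0 : 0 < x := htstar.trans_le hx'
      rw [Real.norm_eq_abs, Real.norm_eq_abs]
      refine le_trans (hhb x hx') ?_
      rw [abs_of_nonneg (by positivity)]
  -- derivative of G
  have hG' : ∀ t : ℝ, tstar < t → HasDerivAt G (h t) t := by
    intro t ht
    set a : ℝ := (tstar + t) / 2 with hadef
    have hta : tstar < a := by rw [hadef]; linarith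
    have hat : a < t := by rw [hadef]; linarith
    have key : ∀ x : ℝ, a < x → G x = G a + ∫ ζ in a..x, h ζ := by
      intro x hx
      have hsplit : (∫ ζ in Ioi a, h ζ) = (∫ ζ in Ioc a x, h ζ) + ∫ ζ in Ioi x, h ζ := by
        rw [← setIntegral_union (Ioc_disjoint_Ioi le_rfl) measurableSet_Ioi
          ((hInt a hta.le).mono_set Ioc_subset_Ioi_self)
          (hInt x (hta.le.trans hx.le)), Ioc_union_Ioi_eq_Ioi hx.le]
      rw [hG x, hG a, intervalIntegral.integral_of_le hx.le]
      rw [hhdef] at hsplit ⊢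
      simp only at hsplit ⊢
      rw [hsplit]; ring
    have hca : ContinuousAt h t := hhcont.continuousAt (Ioi_mem_nhds ht)
    have hd : HasDerivAt (fun x => G a + ∫ ζ in a..x, h ζ) (h t) t := by
      have hsub2 : uIcc a t ⊆ Ioi tstar := by
        rw [uIcc_of_le hat.le]
        exact fun y hy => lt_of_lt_of_le hta hy.1
      have : HasDerivAt (fun x => ∫ ζ in a..x, h ζ) (h t) t :=
        intervalIntegral.integral_hasDerivAt_right
          ((hhcont.mono hsub2).intervalIntegrable)
          (ContinuousOn.stronglyMeasurableAtFilter isOpen_Ioi hhcont t ht) hca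
      simpa using this.const_add (G a)
    exact hd.congr_of_eventuallyEq
      (eventually_of_mem (Ioi_mem_nhds hat) fun x hx => key x hx)
  have hdG : ∀ t : ℝ, tstar < t → deriv G t = h t := fun t ht => (hG' t ht).deriv
  have hevd : ∀ t : ℝ, tstar < t → deriv G =ᶠ[nhds t] h := fun t ht =>
    eventually_of_mem (Ioi_mem_nhds ht) fun x hx => hdG x hx
  have hh' : ∀ t : ℝ, tstar < t → HasDerivAt h
      (Real.exp (-(N * t)) * (-N) * F t + Real.exp (-(N * t)) * (Real.exp (N * t) * g t)) t := by
    intro t ht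
    have he : HasDerivAt (fun ζ : ℝ => Real.exp (-(N * ζ))) (Real.exp (-(N * t)) * (-N)) t := by
      simpa using (((hasDerivAt_id t).const_mul N).neg).exp
    exact he.mul (hF' t ht)
  refine ⟨hInt, fun t ht => (hG' t ht).differentiableAt, ?_, ?_, ?_⟩
  · intro t ht
    exact (hevd t ht).differentiableAt_iff.2 (hh' t ht).differentiableAt
  · intro t ht
    rw [(hevd t ht).deriv_eq, (hh' t ht).deriv, hdG t ht, hhdef]
    simp only
    rw [Real.exp_neg]
    field_simp
    ring
  · intro t ht
    have ht0 : 0 < t := htstar.trans_le ht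
    have hGb : |G t| ≤ C * (t ^ (-σ) / σ) := by
      rw [hG t, abs_neg]
      have e1 : |∫ ζ in Ioi t, h ζ| ≤ ∫ ζ in Ioi t, |h ζ| := by
        simpa [Real.norm_eq_abs] using
          norm_integral_le_integral_norm (μ := volume.restrict (Ioi t)) h
      have hIa : IntegrableOn (fun ζ => |h ζ|) (Ioi t) volume := (hInt t ht).abs
      have hIb : IntegrableOn (fun x : ℝ => C * x ^ (-(1 + σ))) (Ioi t) volume :=
        (integrableOn_Ioi_rpow_of_lt (by linarith) ht0).const_mul C
      have e2 : (∫ ζ in Ioi t, |h ζ|) ≤ ∫ ζ in Ioi t, C * ζ ^ (-(1 + σ)) := by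
        apply setIntegral_mono_on hIa hIb measurableSet_Ioi
        intro x hx
        exact hhb x (ht.trans (le_of_lt hx))
      have e3 : (∫ ζ in Ioi t, C * ζ ^ (-(1 + σ))) = C * (t ^ (-σ) / σ) := by
        rw [MeasureTheory.integral_const_mul, integral_Ioi_rpow_of_lt (by linarith) ht0]
        rw [show (-(1 + σ) + 1 : ℝ) = -σ by ring]
        field_simp
      calc |∫ ζ in Ioi t, h ζ| ≤ ∫ ζ in Ioi t, |h ζ| := e1
        _ ≤ ∫ ζ in Ioi t, C * ζ ^ (-(1 + σ)) := e2
        _ = C * (t ^ (-σ) / σ) := e3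
    have hts : (0:ℝ) < t ^ σ := Real.rpow_pos_of_pos ht0 _
    have hmul : t ^ σ * |G t| ≤ t ^ σ * (C * (t ^ (-σ) / σ)) :=
      mul_le_mul_of_nonneg_left hGb hts.le
    have hcancel : t ^ σ * (C * (t ^ (-σ) / σ)) = C / σ := by
      rw [Real.rpow_neg ht0.le]
      field_simp
    have hfinal : C / σ = 1 / (N * σ) * (1 - (σ + 1) / (N * tstar))⁻¹ * B := by
      rw [hCdef, hθdef]
      rw [show (σ + 1 : ℝ) = 1 + σ by ring]
      field_simp
    rw [hcancel, hfinal] at hmul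
    exact hmul
end
end
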